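/- Let h : ℝᵖ × D → ℝ be differentiable in the parameters, (xᵢ, yᵢ), i = 1..n training data with yᵢ ∈ {−1,1}, ℓ the binary cross-entropy, L(w) = (1/n) Σᵢ ℓ(yᵢ, h(w, xᵢ)) the training loss, and g(w) = ℓ'(y_I, h(w,x_I)) ∇_w h(w, x_I) − ∇_w L(w) the mini-batch (batch size 1) gradient noise where I is uniform on {1,...,n}. If ‖∇_w h(w, x)‖ ≤ M for all x, then E[‖g(w)‖²] ≤ M² L(w). -/

import Mathlib

/-!
Let `aᵢ = ℓ'(yᵢ, h(w, xᵢ)) ∇_w h(w, xᵢ)` be the per-sample gradients; the gradient of the training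
loss is their mean. The empirical variance of the `aᵢ` is at most their mean squared norm, and
`‖aᵢ‖² ≤ M² ℓ'(yᵢ, h(w, xᵢ))² ≤ M² ℓ(yᵢ, h(w, xᵢ))` because the logistic loss is self-bounding:
with `t = exp(-y z)`, `ℓ'² = (t / (1 + t))² ≤ t / (1 + t) ≤ log (1 + t) = ℓ`.
-/

open Real Finset InnerProductSpace

section Gradient

variable {F : Type*} [NormedAddCommGroup F] [InnerProductSpace ℝ F] [CompleteSpace F]
  {f : F → ℝ} {g x : F}

theorem HasDerivAt.comp_hasGradientAt {φ : ℝ → ℝ} {φ' : ℝ} (hφ : HasDerivAt φ φ' (f x))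
    (hf : HasGradientAt f g x) : HasGradientAt (φ ∘ f) (φ' • g) x := by
  rw [hasGradientAt_iff_hasFDerivAt, map_smul]
  exact hφ.comp_hasFDerivAt x hf.hasFDerivAt

theorem HasGradientAt.const_mul (hf : HasGradientAt f g x) (c : ℝ) :
    HasGradientAt (fun w => c * f w) (c • g) x := by
  rw [hasGradientAt_iff_hasFDerivAt, map_smul]
  exact hf.hasFDerivAt.const_mul c

theorem HasGradientAt.fun_sum {ι : Type*} {u : Finset ι} {f : ι → F → ℝ} {g : ι → F}
    (hf : ∀ i ∈ u, HasGradientAt (f i) (g i) x) :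
    HasGradientAt (fun w => ∑ i ∈ u, f i w) (∑ i ∈ u, g i) x := by
  rw [hasGradientAt_iff_hasFDerivAt, map_sum]
  exact HasFDerivAt.fun_sum fun i hi => (hf i hi).hasFDerivAt

end Gradient

theorem sum_norm_sub_average_sq_le {F ι : Type*} [NormedAddCommGroup F] [InnerProductSpace ℝ F]
    [Fintype ι] (a : ι → F) :
    ∑ i, ‖a i - (1 / Fintype.card ι : ℝ) • ∑ j, a j‖ ^ 2 ≤ ∑ i, ‖a i‖ ^ 2 := by
  set c : ℝ := 1 / Fintype.card ι
  -- `card * c ^ 2 = c` also when `ι` is empty, since then `c = 1 / 0 = 0`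
  have hc : (Fintype.card ι : ℝ) * c ^ 2 = c := by
    rcases eq_or_ne (Fintype.card ι : ℝ) 0 with h0 | h0
    · simp [c, h0]
    · simp only [c]; field_simp
  calc ∑ i, ‖a i - c • ∑ j, a j‖ ^ 2
      = ∑ i, ‖a i‖ ^ 2 - 2 * c * ‖∑ j, a j‖ ^ 2 + Fintype.card ι * c ^ 2 * ‖∑ j, a j‖ ^ 2 := by
        simp only [norm_sub_sq_real, sum_add_distrib, sum_sub_distrib, ← mul_sum, ← sum_inner,
          inner_smul_right, real_inner_self_eq_norm_sq, norm_smul, sum_const, card_univ,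
          nsmul_eq_mul, mul_pow, Real.norm_eq_abs, sq_abs]
        ring
    _ = ∑ i, ‖a i‖ ^ 2 - c * ‖∑ j, a j‖ ^ 2 := by rw [hc]; ring
    _ ≤ ∑ i, ‖a i‖ ^ 2 := sub_le_self _ (by positivity)

noncomputable section LogisticLoss

def logisticLoss (y z : ℝ) : ℝ := log (1 + exp (-y * z))

def logisticLossDeriv (y z : ℝ) : ℝ := -y * exp (-y * z) / (1 + exp (-y * z))

theorem hasDerivAt_logisticLoss (y z : ℝ) :
    HasDerivAt (logisticLoss y) (logisticLossDeriv y z) z := by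
  have hlin : HasDerivAt (fun z => -y * z) (-y) z := by
    simpa using (hasDerivAt_id z).const_mul (-y)
  have hpos : 1 + exp (-y * z) ≠ 0 := by positivity
  convert ((hasDerivAt_exp _).comp z hlin).const_add 1 |>.log hpos using 1
  · ext z; simp [logisticLoss]
  · simp only [logisticLossDeriv, Function.comp_apply]
    ring

theorem sq_div_one_add_le_log_one_add {t : ℝ} (ht : 0 ≤ t) : (t / (1 + t)) ^ 2 ≤ log (1 + t) := by
  have hfrac_nonneg : 0 ≤ t / (1 + t) := by positivity
  have hfrac_le_one : t / (1 + t) ≤ 1 := by rw [div_le_one (by positivity)]; linarith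
  have hlog : 1 - (1 + t)⁻¹ ≤ log (1 + t) := one_sub_inv_le_log_of_pos (by positivity)
  have hfrac : 1 - (1 + t)⁻¹ = t / (1 + t) := by field_simp; ring
  calc (t / (1 + t)) ^ 2 ≤ t / (1 + t) := by nlinarith
    _ ≤ log (1 + t) := hfrac ▸ hlog

theorem logisticLossDeriv_sq_le {y : ℝ} (hy : y ^ 2 ≤ 1) (z : ℝ) :
    logisticLossDeriv y z ^ 2 ≤ logisticLoss y z := by
  set t := exp (-y * z)
  calc logisticLossDeriv y z ^ 2 = y ^ 2 * (t / (1 + t)) ^ 2 := by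
        simp only [logisticLossDeriv, t]; ring
    _ ≤ 1 * (t / (1 + t)) ^ 2 := by gcongr
    _ ≤ logisticLoss y z := by
        rw [one_mul]; exact sq_div_one_add_le_log_one_add (exp_pos _).le

theorem norm_logisticLossDeriv_smul_sq_le {E : Type*} [SeminormedAddCommGroup E]
    [NormedSpace ℝ E] {y M : ℝ} (hy : y ^ 2 ≤ 1) (z : ℝ) {v : E} (hv : ‖v‖ ≤ M) :
    ‖logisticLossDeriv y z • v‖ ^ 2 ≤ M ^ 2 * logisticLoss y z := by
  have hv_sq : ‖v‖ ^ 2 ≤ M ^ 2 := pow_le_pow_left₀ (norm_nonneg _) hv 2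
  rw [norm_smul, mul_pow, Real.norm_eq_abs, sq_abs, mul_comm]
  exact mul_le_mul hv_sq (logisticLossDeriv_sq_le hy z) (sq_nonneg _) ((sq_nonneg _).trans hv_sq)

end LogisticLoss

theorem sgd_noise_upper_bound_general {p n : ℕ} {D : Type*}
    (h : EuclideanSpace ℝ (Fin p) → D → ℝ)
    (x : Fin n → D) (y : Fin n → ℝ) (hy : ∀ i, y i = -1 ∨ y i = 1)
    (hdiff : ∀ d, Differentiable ℝ (fun w => h w d))
    (M : ℝ) (hM : ∀ w d, ‖gradient (fun w' => h w' d) w‖ ≤ M)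
    (w : EuclideanSpace ℝ (Fin p)) :
    (1 / n : ℝ) * ∑ i, ‖(deriv (fun z : ℝ => Real.log (1 + Real.exp (-(y i) * z)))
          (h w (x i))) • gradient (fun w' => h w' (x i)) w -
        gradient (fun w' => (1 / n : ℝ) *
          ∑ j, Real.log (1 + Real.exp (-(y j) * h w' (x j)))) w‖ ^ 2
      ≤ M ^ 2 * ((1 / n : ℝ) * ∑ i, Real.log (1 + Real.exp (-(y i) * h w (x i)))) := by
  set a : Fin n → EuclideanSpace ℝ (Fin p) := fun i =>
    logisticLossDeriv (y i) (h w (x i)) • gradient (fun w' => h w' (x i)) w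
  have hloss_grad : ∀ i, HasGradientAt (fun w' => logisticLoss (y i) (h w' (x i))) (a i) w :=
    fun i => (hasDerivAt_logisticLoss _ _).comp_hasGradientAt (hdiff (x i) w).hasGradientAt
  have hmean_grad : gradient (fun w' => (1 / n : ℝ) *
      ∑ j, logisticLoss (y j) (h w' (x j))) w = (1 / n : ℝ) • ∑ j, a j :=
    ((HasGradientAt.fun_sum fun j _ => hloss_grad j).const_mul _).gradient
  have hy_sq : ∀ i, y i ^ 2 ≤ 1 := fun i => by rcases hy i with hi | hi <;> simp [hi]
  change (1 / n : ℝ) * ∑ i, ‖deriv (logisticLoss (y i)) (h w (x i)) • _ - gradient (fun w' =>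
    (1 / n : ℝ) * ∑ j, logisticLoss (y j) (h w' (x j))) w‖ ^ 2 ≤
    M ^ 2 * ((1 / n : ℝ) * ∑ i, logisticLoss (y i) (h w (x i)))
  simp only [(hasDerivAt_logisticLoss _ _).deriv, hmean_grad]
  calc (1 / n : ℝ) * ∑ i, ‖a i - (1 / n : ℝ) • ∑ j, a j‖ ^ 2
      ≤ (1 / n : ℝ) * ∑ i, ‖a i‖ ^ 2 := by
        refine mul_le_mul_of_nonneg_left ?_ (by positivity)
        simpa using sum_norm_sub_average_sq_le a
    _ ≤ (1 / n : ℝ) * ∑ i, M ^ 2 * logisticLoss (y i) (h w (x i)) := by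
        gcongr with i
        exact norm_logisticLossDeriv_smul_sq_le (hy_sq i) _ (hM w (x i))
    _ = M ^ 2 * ((1 / n : ℝ) * ∑ i, logisticLoss (y i) (h w (x i))) := by
        rw [← mul_sum]; ring

/-- Upper bound on the SGD (batch size 1) gradient-noise scale:
`E[‖g(w)‖²] ≤ M² L(w)` where `g(w) = ℓ'(y_I, h(w,x_I)) ∇h(w,x_I) − ∇L(w)`,
`I` uniform on the `n` training points, `ℓ` the binary cross-entropy, and
`‖∇_w h(w,x)‖ ≤ M`. -/
theorem sgd_noise_upper_bound {p n : ℕ} {D : Type*} (hn : 0 < n)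
    (h : EuclideanSpace ℝ (Fin p) → D → ℝ)
    (x : Fin n → D) (y : Fin n → ℝ) (hy : ∀ i, y i = -1 ∨ y i = 1)
    (hdiff : ∀ d, Differentiable ℝ (fun w => h w d))
    (M : ℝ) (hM : ∀ w d, ‖gradient (fun w' => h w' d) w‖ ≤ M)
    (w : EuclideanSpace ℝ (Fin p)) :
    (1 / n : ℝ) * ∑ i, ‖(deriv (fun z : ℝ => Real.log (1 + Real.exp (-(y i) * z)))
          (h w (x i))) • gradient (fun w' => h w' (x i)) w -
        gradient (fun w' => (1 / n : ℝ) *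
          ∑ j, Real.log (1 + Real.exp (-(y j) * h w' (x j)))) w‖ ^ 2
      ≤ M ^ 2 * ((1 / n : ℝ) * ∑ i, Real.log (1 + Real.exp (-(y i) * h w (x i)))) :=
  sgd_noise_upper_bound_general h x y hy hdiff M hM w
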